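/- arXiv:1705.01825 — 5 statements merged into one kernel-verified Lean document; each statement's English description precedes it below -/
import Mathlib

section
/- (Lemma A.1, comparison part) Let j, j′ ∈ ℝ with j′ > j, let m be an IVP solution with parameter j and m′ an IVP solution with parameter j′ (both defined on all of [0, ℓ]). Then m(x) > m′(x) for every x ∈ (0, ℓ]; in particular m′(ℓ) < m(ℓ). -/
open Real Set Filter Topology

/-- The force profile `g(x) = ∫_{x-1}^x 1_{y ≤ ℓ/2} dy − ∫_x^{x+1} 1_{y ≤ ℓ/2} dy`. -/
noncomputable def gfun (ℓ : ℝ) (x : ℝ) : ℝ :=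
  (∫ y in (x - 1)..x, if y ≤ ℓ / 2 then (1 : ℝ) else 0) -
  (∫ y in x..(x + 1), if y ≤ ℓ / 2 then (1 : ℝ) else 0)

/-- An IVP solution with parameter `j`: a differentiable `m` on `[0, ℓ]` with `m 0 = 0`
and `m'(x) = -2j + βλ(1 - m(x)²) g(x)` on `[0, ℓ]`. -/
def IsIVPSolution (β lam ℓ j : ℝ) (m : ℝ → ℝ) : Prop :=
  m 0 = 0 ∧ ∀ x ∈ Icc (0 : ℝ) ℓ,
    HasDerivAt m (-2 * j + β * lam * (1 - m x ^ 2) * gfun ℓ x) x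

/-- A stationary solution: an IVP solution which also satisfies `m ℓ = 0`. -/
def IsStationarySolution (β lam ℓ j : ℝ) (m : ℝ → ℝ) : Prop :=
  IsIVPSolution β lam ℓ j m ∧ m ℓ = 0

/-!
Where the two solutions meet, the nonlinear terms coincide, so there the derivative of `m - m'`
is `2 (j' - j) > 0`. Hence `m'` can never overtake `m` (fencing), nor even touch it at some
`x > 0`: `m - m' ≥ 0` to the left of `x` and vanishing at `x` would force a nonpositive
derivative there.
-/

theorem HasDerivWithinAt.nonpos_of_eventually_le_left {u : ℝ → ℝ} {d x : ℝ}
    (hu : HasDerivWithinAt u d (Iio x) x) (hmin : ∀ᶠ y in 𝓝[<] x, u x ≤ u y) : d ≤ 0 := by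
  refine le_of_tendsto ((hasDerivWithinAt_iff_tendsto_slope' self_notMem_Iio).1 hu) ?_
  filter_upwards [hmin, self_mem_nhdsWithin] with y hy (hyx : y < x)
  rw [slope_def_field]
  exact div_nonpos_of_nonneg_of_nonpos (sub_nonneg.2 hy) (sub_nonpos.2 hyx.le)

theorem image_lt_of_deriv_lt_deriv_boundary {f f' B B' : ℝ → ℝ} {a b : ℝ}
    (hf : ∀ x ∈ Icc a b, HasDerivAt f (f' x) x) (hB : ∀ x ∈ Icc a b, HasDerivAt B (B' x) x)
    (ha : f a ≤ B a) (bound : ∀ x ∈ Icc a b, f x = B x → f' x < B' x) :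
    ∀ ⦃x⦄, x ∈ Ioc a b → f x < B x := by
  intro x hx
  have hle : ∀ ⦃y⦄, y ∈ Icc a b → f y ≤ B y :=
    image_le_of_deriv_right_lt_deriv_boundary'
      (fun y hy => (hf y hy).continuousAt.continuousWithinAt)
      (fun y hy => (hf y (Ico_subset_Icc_self hy)).hasDerivWithinAt) ha
      (fun y hy => (hB y hy).continuousAt.continuousWithinAt)
      (fun y hy => (hB y (Ico_subset_Icc_self hy)).hasDerivWithinAt)
      (fun y hy => bound y (Ico_subset_Icc_self hy))
  have hxI : x ∈ Icc a b := Ioc_subset_Icc_self hx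
  refine (hle hxI).lt_of_ne fun hfx => ?_
  have hgap : B' x - f' x ≤ 0 := by
    refine ((hB x hxI).sub (hf x hxI)).hasDerivWithinAt.nonpos_of_eventually_le_left ?_
    filter_upwards [Ioo_mem_nhdsLT hx.1] with y hy
    simpa [hfx] using hle ⟨hy.1.le, hy.2.le.trans hx.2⟩
  linarith [bound x hxI hfx]

theorem ivp_comparison_general (β lam ℓ : ℝ) (hℓ : 2 < ℓ)
    (j j' : ℝ) (hjj : j < j') (m m' : ℝ → ℝ)
    (hm : IsIVPSolution β lam ℓ j m) (hm' : IsIVPSolution β lam ℓ j' m') :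
    (∀ x ∈ Ioc (0 : ℝ) ℓ, m' x < m x) ∧ m' ℓ < m ℓ := by
  have hlt : ∀ x ∈ Ioc (0 : ℝ) ℓ, m' x < m x :=
    image_lt_of_deriv_lt_deriv_boundary hm'.2 hm.2 (hm'.1.trans hm.1.symm).le
      fun x _ hx => by rw [hx]; linarith
  exact ⟨hlt, hlt ℓ ⟨by linarith, le_rfl⟩⟩

/-- Lemma A.1 (comparison): if `j' > j` then the IVP solution with parameter `j'` lies
strictly below the one with parameter `j` on `(0, l]`; in particular `m' l < m l`. -/
theorem ivp_comparison (β lam ℓ : ℝ) (hβ : 0 < β) (hlam : 0 < lam) (hℓ : 2 < ℓ)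
    (j j' : ℝ) (hjj : j < j') (m m' : ℝ → ℝ)
    (hm : IsIVPSolution β lam ℓ j m) (hm' : IsIVPSolution β lam ℓ j' m') :
    (∀ x ∈ Ioc (0 : ℝ) ℓ, m' x < m x) ∧ m' ℓ < m ℓ :=
  ivp_comparison_general β lam ℓ hℓ j j' hjj m m' hm hm'
end

section
/- (Lemma A.1, limit as j → −∞) For every M > 0 there exists J < 0 such that for every j < J, every IVP solution m with parameter j that is defined on all of [0, ℓ] satisfies m(ℓ) > M. -/
open Real Set

/-
For `j → -∞` the drift `-2j` dominates: since `0 ≤ g ≤ 1`, the reaction term is at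
least `-βλ m²`, so as long as `0 ≤ m ≤ K` the slope of `m` exceeds `-2j - βλK²`. Once
this exceeds `K/ℓ`, the line `x ↦ K x / ℓ` is a lower fence for `m` on `[0, ℓ]`, whence
`m ℓ ≥ K`.
-/

open intervalIntegral

theorem integral_add_one_le_of_antitone {h : ℝ → ℝ} (hh : Antitone h) (x : ℝ) :
    ∫ y in x..x + 1, h y ≤ ∫ y in x - 1..x, h y := by
  have hshift : ∫ y in x..x + 1, h y = ∫ y in x - 1..x, h (y + 1) := by
    rw [integral_comp_add_right, sub_add_cancel]
  rw [hshift]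
  exact integral_mono_on (by linarith)
    (hh.comp_monotone (monotone_id.add_const 1)).intervalIntegrable hh.intervalIntegrable
    fun y _ => hh (by linarith)

theorem antitone_ite_le (c : ℝ) : Antitone fun y : ℝ => if y ≤ c then (1 : ℝ) else 0 := by
  intro a b hab
  by_cases hb : b ≤ c
  · simp [hb, hab.trans hb]
  · simp only [hb, if_false]
    split <;> norm_num

theorem gfun_nonneg (ℓ x : ℝ) : 0 ≤ gfun ℓ x :=
  sub_nonneg.2 (integral_add_one_le_of_antitone (antitone_ite_le _) x)

theorem gfun_le_one (ℓ x : ℝ) : gfun ℓ x ≤ 1 := by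
  have hle : ∀ y, (if y ≤ ℓ / 2 then (1 : ℝ) else 0) ≤ 1 := fun y => by
    split <;> norm_num
  have hnonneg : ∀ y, 0 ≤ (if y ≤ ℓ / 2 then (1 : ℝ) else 0) := fun y => by
    split <;> norm_num
  have hleft : ∫ y in x - 1..x, (if y ≤ ℓ / 2 then (1 : ℝ) else 0) ≤ 1 := by
    calc ∫ y in x - 1..x, (if y ≤ ℓ / 2 then (1 : ℝ) else 0)
        ≤ ∫ _ in x - 1..x, (1 : ℝ) :=
          integral_mono_on (by linarith) (antitone_ite_le _).intervalIntegrable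
            intervalIntegrable_const fun y _ => hle y
      _ = 1 := by simp
  have hright : 0 ≤ ∫ y in x..x + 1, (if y ≤ ℓ / 2 then (1 : ℝ) else 0) :=
    integral_nonneg (by linarith) fun y _ => hnonneg y
  rw [gfun]
  linarith

theorem IsIVPSolution.mul_le {β lam ℓ j c : ℝ} {m : ℝ → ℝ}
    (hm : IsIVPSolution β lam ℓ j m) (hβlam : 0 ≤ β * lam) (hc : 0 ≤ c)
    (hj : β * lam * (c * ℓ) ^ 2 + c < -2 * j) :
    ∀ x ∈ Icc 0 ℓ, c * x ≤ m x := by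
  obtain ⟨hm0, hderiv⟩ := hm
  refine image_le_of_deriv_right_lt_deriv_boundary' (f' := fun _ => c)
    (continuous_const.mul continuous_id).continuousOn
    (fun x _ => ((hasDerivAt_id x).const_mul c).hasDerivWithinAt.congr_deriv (mul_one c))
    (by simp [hm0]) (fun x hx => (hderiv x hx).continuousAt.continuousWithinAt)
    (fun x hx => (hderiv x (Ico_subset_Icc_self hx)).hasDerivWithinAt) ?_
  rintro x ⟨hx0, hxℓ⟩ hmx
  have hmx0 : 0 ≤ m x := hmx ▸ mul_nonneg hc hx0
  have hmxK : m x ≤ c * ℓ := hmx ▸ mul_le_mul_of_nonneg_left hxℓ.le hc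
  have hreaction : -(m x) ^ 2 ≤ (1 - m x ^ 2) * gfun ℓ x := by
    nlinarith [gfun_nonneg ℓ x, gfun_le_one ℓ x]
  have hsq : m x ^ 2 ≤ (c * ℓ) ^ 2 := pow_le_pow_left₀ hmx0 hmxK 2
  nlinarith [mul_le_mul_of_nonneg_left hreaction hβlam, mul_le_mul_of_nonneg_left hsq hβlam]

/-- Lemma A.1 (limit as `j → -∞`). -/
theorem ivp_endpoint_to_top (β lam ℓ : ℝ) (hβ : 0 < β) (hlam : 0 < lam) (hℓ : 2 < ℓ) :
    ∀ M > (0 : ℝ), ∃ J < (0 : ℝ), ∀ j < J, ∀ m : ℝ → ℝ,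
      IsIVPSolution β lam ℓ j m → m ℓ > M := by
  intro M hM
  have hβlam : 0 < β * lam := mul_pos hβ hlam
  have hℓpos : 0 < ℓ := by linarith
  set c := (M + 1) / ℓ
  have hcℓ : c * ℓ = M + 1 := div_mul_cancel₀ _ hℓpos.ne'
  have hc : 0 ≤ c := by positivity
  have hdrift : 0 < β * lam * (M + 1) ^ 2 + c := by positivity
  refine ⟨-(β * lam * (M + 1) ^ 2 + c) / 2, by linarith, fun j hj m hm => ?_⟩
  have hfence := hm.mul_le hβlam.le hc (by rw [hcℓ]; linarith) ℓ ⟨hℓpos.le, le_rfl⟩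
  linarith
end

section
/- (Corollary A.2, existence and uniqueness) There exists exactly one stationary solution: there exist a constant j ∈ ℝ and a differentiable function m : [0, ℓ] → ℝ with m(0) = m(ℓ) = 0 and m′(x) = −2j + βλ(1 − m(x)²) g(x) for all x ∈ [0, ℓ], and if (j₁, m₁) and (j₂, m₂) are two such pairs then j₁ = j₂ and m₁(x) = m₂(x) for all x ∈ [0, ℓ]. -/
/-!
Existence is by shooting in `j`. Replacing `1 - m²` by `1 - c(m)²`, with `c` the projection onto
`[-1, 1]`, makes the field globally Lipschitz, so the clamped initial value problem is solvable for
every `j` (Picard–Lindelöf) and its endpoint value `m_j(ℓ)` is continuous in `j` (Gronwall). It is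
positive for `j = 0`, where `m_j` is nondecreasing and `g(ℓ/2) = 1`, and negative for `j = βλ`,
where the slope is at most `-βλ`; so it vanishes for some `j > 0`. Since `m' = -2j < 0` wherever
`|m| = 1`, that solution never leaves `[-1, 1]`, where the clamp is inactive.

For uniqueness, `w = m₁ - m₂` solves the linear equation `w' = 2(j₂ - j₁) - βλ g (m₁ + m₂) w`
with `w(0) = w(ℓ) = 0`. With an integrating factor `E > 0`, `(w E)' = 2(j₂ - j₁) E` has a fixed
sign, which forces `j₁ = j₂` and then `w E` constant, i.e. `w = 0`.
-/

open Real Set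

open MeasureTheory
open scoped NNReal

lemma intervalIntegral_ite_le_one_zero {a b : ℝ} (c : ℝ) (hab : a ≤ b) :
    (∫ y in a..b, if y ≤ c then (1 : ℝ) else 0) = max (min b c - a) 0 := by
  have hind : (fun y : ℝ => if y ≤ c then (1 : ℝ) else 0) = (Iic c).indicator fun _ => 1 := by
    ext y; simp [indicator, mem_Iic]
  rw [intervalIntegral.integral_of_le hab, hind, setIntegral_indicator measurableSet_Iic,
    Ioc_inter_Iic, setIntegral_const, Real.volume_real_Ioc, smul_eq_mul, mul_one]

lemma gfun_eq_max_sub_max (ℓ x : ℝ) :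
    gfun ℓ x = max (min x (ℓ / 2) - (x - 1)) 0 - max (min (x + 1) (ℓ / 2) - x) 0 := by
  rw [gfun, intervalIntegral_ite_le_one_zero _ (by linarith),
    intervalIntegral_ite_le_one_zero _ (by linarith)]

lemma continuous_gfun (ℓ : ℝ) : Continuous (gfun ℓ) := by
  simp_rw [funext (gfun_eq_max_sub_max ℓ)]
  fun_prop

lemma gfun_mem_Icc (ℓ x : ℝ) : gfun ℓ x ∈ Icc 0 1 := by
  rw [gfun_eq_max_sub_max, mem_Icc]
  simp only [max_def, min_def]
  constructor <;> split_ifs <;> linarith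

lemma gfun_half (ℓ : ℝ) : gfun ℓ (ℓ / 2) = 1 := by
  rw [gfun_eq_max_sub_max, min_self, min_eq_right (by linarith)]
  norm_num

noncomputable def unitClamp (y : ℝ) : ℝ := projIcc (-1) 1 (by norm_num) y

lemma unitClamp_mem_Icc (y : ℝ) : unitClamp y ∈ Icc (-1) 1 := Subtype.prop _

lemma unitClamp_of_mem {y : ℝ} (hy : y ∈ Icc (-1) 1) : unitClamp y = y := by
  rw [unitClamp, projIcc_of_mem _ hy]

lemma abs_unitClamp_sub_unitClamp_le (y z : ℝ) : |unitClamp y - unitClamp z| ≤ |y - z| :=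
  abs_projIcc_sub_projIcc _

noncomputable def saturation (y : ℝ) : ℝ := 1 - unitClamp y ^ 2

lemma saturation_of_mem {y : ℝ} (hy : y ∈ Icc (-1) 1) : saturation y = 1 - y ^ 2 := by
  rw [saturation, unitClamp_of_mem hy]

lemma saturation_mem_Icc (y : ℝ) : saturation y ∈ Icc 0 1 := by
  obtain ⟨h₁, h₂⟩ := unitClamp_mem_Icc y
  constructor <;> unfold saturation <;> nlinarith

lemma lipschitzWith_saturation : LipschitzWith 2 saturation := by
  refine LipschitzWith.of_dist_le_mul fun y z => ?_
  obtain ⟨hy₁, hy₂⟩ := unitClamp_mem_Icc y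
  obtain ⟨hz₁, hz₂⟩ := unitClamp_mem_Icc z
  have hsum : |unitClamp y + unitClamp z| ≤ 2 := abs_le.2 ⟨by linarith, by linarith⟩
  calc dist (saturation y) (saturation z)
        = |unitClamp y + unitClamp z| * |unitClamp y - unitClamp z| := by
        rw [Real.dist_eq, saturation, saturation, ← abs_mul, ← abs_neg]
        ring_nf
    _ ≤ 2 * |y - z| :=
        mul_le_mul hsum (abs_unitClamp_sub_unitClamp_le y z) (abs_nonneg _) zero_le_two
    _ = (2 : ℝ≥0) * dist y z := by rw [Real.dist_eq]; rfl

section ODE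

variable {E : Type*} [NormedAddCommGroup E] [NormedSpace ℝ E]

theorem exists_hasDerivWithinAt_of_lipschitzWith_of_norm_le [CompleteSpace E] {v : ℝ → E → E}
    {K : ℝ≥0} {C tmin tmax : ℝ} (t₀ : Icc tmin tmax) (x₀ : E)
    (hcont : ∀ x, Continuous (v · x)) (hlip : ∀ t, LipschitzWith K (v t))
    (hbound : ∀ t x, ‖v t x‖ ≤ C) :
    ∃ α : ℝ → E, α t₀ = x₀ ∧
      ∀ t ∈ Icc tmin tmax, HasDerivWithinAt α (v t (α t)) (Icc tmin tmax) t := by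
  have hC : 0 ≤ C := (norm_nonneg _).trans (hbound t₀ x₀)
  have hlen : 0 ≤ tmax - tmin := sub_nonneg.2 (t₀.2.1.trans t₀.2.2)
  refine IsPicardLindelof.exists_eq_forall_mem_Icc_hasDerivWithinAt₀
    (a := ⟨C * (tmax - tmin), mul_nonneg hC hlen⟩) (L := ⟨C, hC⟩) (K := K)
    { lipschitzOnWith := fun t _ => (hlip t).lipschitzOnWith
      continuousOn := fun x _ => (hcont x).continuousOn
      norm_le := fun t _ x _ => hbound t x
      mul_max_le := ?_ }
  obtain ⟨h₁, h₂⟩ := t₀.2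
  show C * max (tmax - t₀) (t₀ - tmin) ≤ C * (tmax - tmin) - 0
  rw [sub_zero]
  exact mul_le_mul_of_nonneg_left (max_le (by linarith) (by linarith)) hC

theorem continuous_apply_of_hasDerivAt_of_dist_le {P : Type*} [PseudoMetricSpace P]
    {v : P → ℝ → E → E} {sol : P → ℝ → E} {K : ℝ≥0} {L a b : ℝ} (hab : a ≤ b)
    (hlip : ∀ p t, LipschitzWith K (v p t))
    (hvp : ∀ p q t x, dist (v p t x) (v q t x) ≤ L * dist p q)
    (hsol : ∀ p, ∀ t ∈ Icc a b, HasDerivAt (sol p) (v p t (sol p t)) t)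
    (hinit : ∀ p q, sol p a = sol q a) :
    Continuous fun p => sol p b := by
  have hcont (p) : ContinuousOn (sol p) (Icc a b) :=
    fun t ht => (hsol p t ht).continuousAt.continuousWithinAt
  have hderiv (p) : ∀ t ∈ Ico a b, HasDerivWithinAt (sol p) (v p t (sol p t)) (Ici t) t :=
    fun t ht => (hsol p t (Ico_subset_Icc_self ht)).hasDerivWithinAt
  have hdist (p q) : dist (sol q b) (sol p b) ≤ gronwallBound 0 K (L * dist q p) (b - a) := by
    simpa using dist_le_of_approx_trajectories_ODE (hlip p) (hcont q) (hderiv q)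
      (fun t _ => hvp q p t _) (hcont p) (hderiv p) (fun t _ => (dist_self _).le)
      (hinit q p ▸ (dist_self _).le) b ⟨hab, le_rfl⟩
  refine continuous_iff_continuousAt.2 fun p => tendsto_iff_dist_tendsto_zero.2 <|
    squeeze_zero (fun _ => dist_nonneg) (fun q => hdist p q) ?_
  have hbound : Continuous fun q => gronwallBound 0 K (L * dist q p) (b - a) :=
    (gronwallBound_continuous_ε 0 K (b - a)).comp
      (continuous_const.mul (continuous_id.dist continuous_const))
  simpa [gronwallBound_ε0_δ0] using hbound.tendsto p

end ODE

theorem le_of_hasDerivAt_neg_of_eq {f f' : ℝ → ℝ} {a b c : ℝ}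
    (hf : ∀ x ∈ Icc a b, HasDerivAt f (f' x) x) (ha : f a ≤ c)
    (hc : ∀ x ∈ Icc a b, f x = c → f' x < 0) :
    ∀ x ∈ Icc a b, f x ≤ c :=
  image_le_of_deriv_right_lt_deriv_boundary' (B := fun _ => c) (B' := 0)
    (fun x hx => (hf x hx).continuousAt.continuousWithinAt)
    (fun x hx => (hf x (Ico_subset_Icc_self hx)).hasDerivWithinAt) ha continuousOn_const
    (fun _ _ => hasDerivWithinAt_const _ _ _) (fun x hx => hc x (Ico_subset_Icc_self hx))

theorem exists_pos_hasDerivAt_eq_mul {a : ℝ → ℝ} {s t : ℝ} (hst : s ≤ t)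
    (ha : ContinuousOn a (Icc s t)) :
    ∃ E : ℝ → ℝ, (∀ x, 0 < E x) ∧ ∀ x ∈ Icc s t, HasDerivAt E (a x * E x) x := by
  -- Extending `a` constantly off `[s, t]` makes its primitive differentiable at `s` and `t` too.
  have hext : Continuous (IccExtend hst ((Icc s t).domRestrict a)) := ha.domRestrict.Icc_extend'
  refine ⟨fun x => exp (∫ y in s..x, IccExtend hst ((Icc s t).domRestrict a) y),
    fun _ => exp_pos _, fun x hx => ?_⟩
  have hA := (hext.integral_hasStrictDerivAt s x).hasDerivAt
  rw [IccExtend_of_mem _ _ hx, domRestrict_apply] at hA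
  exact hA.exp.congr_deriv (mul_comm _ _)

theorem eq_zero_of_hasDerivAt_eq_const_add_mul {w a : ℝ → ℝ} {c s t : ℝ} (hst : s < t)
    (ha : ContinuousOn a (Icc s t)) (hw : ∀ x ∈ Icc s t, HasDerivAt w (c + a x * w x) x)
    (hs : w s = 0) (ht : w t = 0) :
    c = 0 ∧ ∀ x ∈ Icc s t, w x = 0 := by
  obtain ⟨E, hEpos, hE⟩ := exists_pos_hasDerivAt_eq_mul hst.le ha.neg
  have hv : ∀ x ∈ Icc s t, HasDerivAt (fun y => w y * E y) (c * E x) x := fun x hx =>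
    ((hw x hx).fun_mul (hE x hx)).congr_deriv (by rw [Pi.neg_apply]; ring)
  have hvcont : ContinuousOn (fun y => w y * E y) (Icc s t) :=
    fun x hx => (hv x hx).continuousAt.continuousWithinAt
  obtain ⟨ξ, hξ, hslope⟩ := exists_hasDerivAt_eq_slope _ _ hst hvcont
    fun x hx => hv x (Ioo_subset_Icc_self hx)
  have hc : c = 0 := by
    rw [hs, ht, zero_mul, zero_mul, sub_zero, zero_div] at hslope
    exact (mul_eq_zero.1 hslope).resolve_right (hEpos ξ).ne'
  refine ⟨hc, fun x hx => ?_⟩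
  have hconst := constant_of_has_deriv_right_zero hvcont
    (fun y hy => by simpa [hc] using (hv y (Ico_subset_Icc_self hy)).hasDerivWithinAt) x hx
  rw [hs, zero_mul] at hconst
  exact (mul_eq_zero.1 hconst).resolve_right (hEpos x).ne'

noncomputable def clampedField (β lam ℓ j t y : ℝ) : ℝ :=
  -2 * j + β * lam * saturation y * gfun ℓ t

section ClampedField

variable {β lam ℓ : ℝ}

lemma clampedField_of_mem (j t : ℝ) {y : ℝ} (hy : y ∈ Icc (-1) 1) :
    clampedField β lam ℓ j t y = -2 * j + β * lam * (1 - y ^ 2) * gfun ℓ t := by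
  rw [clampedField, saturation_of_mem hy]

lemma clampedField_of_abs_eq_one (j t : ℝ) {y : ℝ} (hy : |y| = 1) :
    clampedField β lam ℓ j t y = -2 * j := by
  rcases (abs_eq zero_le_one).1 hy with rfl | rfl <;> norm_num [clampedField_of_mem]

lemma clampedField_mem_Icc (hβlam : 0 ≤ β * lam) (j t y : ℝ) :
    clampedField β lam ℓ j t y ∈ Icc (-2 * j) (-2 * j + β * lam) := by
  obtain ⟨hs₀, hs₁⟩ := saturation_mem_Icc y
  obtain ⟨hg₀, hg₁⟩ := gfun_mem_Icc ℓ t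
  have h₀ : 0 ≤ saturation y * gfun ℓ t := mul_nonneg hs₀ hg₀
  have h₁ : saturation y * gfun ℓ t ≤ 1 := mul_le_one₀ hs₁ hg₀ hg₁
  constructor <;> rw [clampedField, mul_assoc (β * lam)] <;> nlinarith

lemma lipschitzWith_clampedField (hβlam : 0 ≤ β * lam) (j t : ℝ) :
    LipschitzWith (Real.toNNReal (2 * (β * lam))) (clampedField β lam ℓ j t) := by
  refine LipschitzWith.of_dist_le' fun y z => ?_
  obtain ⟨hg₀, hg₁⟩ := gfun_mem_Icc ℓ t
  have hsat := lipschitzWith_saturation.dist_le_mul y z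
  push_cast at hsat
  calc dist (clampedField β lam ℓ j t y) (clampedField β lam ℓ j t z)
      = β * lam * gfun ℓ t * dist (saturation y) (saturation z) := by
        rw [Real.dist_eq, Real.dist_eq, clampedField, clampedField,
          show ∀ u v : ℝ, -2 * j + β * lam * u * gfun ℓ t - (-2 * j + β * lam * v * gfun ℓ t)
            = β * lam * gfun ℓ t * (u - v) from fun _ _ => by ring,
          abs_mul, abs_of_nonneg (mul_nonneg hβlam hg₀)]
    _ ≤ β * lam * 1 * (2 * dist y z) := by gcongr
    _ = 2 * (β * lam) * dist y z := by ring

lemma dist_clampedField_clampedField (j₁ j₂ t y : ℝ) :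
    dist (clampedField β lam ℓ j₁ t y) (clampedField β lam ℓ j₂ t y) = 2 * dist j₁ j₂ := by
  rw [Real.dist_eq, Real.dist_eq, clampedField, clampedField, add_sub_add_right_eq_sub,
    ← mul_sub, abs_mul, abs_neg, abs_two]

end ClampedField

def IsClampedSolution (β lam ℓ j : ℝ) (m : ℝ → ℝ) : Prop :=
  m 0 = 0 ∧ ∀ x ∈ Icc (0 : ℝ) ℓ, HasDerivAt m (clampedField β lam ℓ j x (m x)) x

section ClampedSolution

variable {β lam ℓ j : ℝ} {m : ℝ → ℝ}

lemma exists_isClampedSolution (hβlam : 0 ≤ β * lam) (hℓ : 0 ≤ ℓ) (j : ℝ) :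
    ∃ m, IsClampedSolution β lam ℓ j m := by
  have hbound (t y : ℝ) : ‖clampedField β lam ℓ j t y‖ ≤ 2 * |j| + β * lam := by
    obtain ⟨h₁, h₂⟩ := clampedField_mem_Icc (ℓ := ℓ) hβlam j t y
    rw [Real.norm_eq_abs, abs_le]
    constructor <;> linarith [neg_abs_le j, le_abs_self j]
  obtain ⟨m, hm0, hm⟩ := exists_hasDerivWithinAt_of_lipschitzWith_of_norm_le
    (⟨0, by constructor <;> linarith⟩ : Icc (-1 : ℝ) (ℓ + 1)) 0
    (fun y => continuous_const.add (continuous_const.mul (continuous_gfun ℓ)))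
    (lipschitzWith_clampedField hβlam j) hbound
  refine ⟨m, hm0, fun x hx => ?_⟩
  obtain ⟨hx₀, hxℓ⟩ := hx
  exact (hm x ⟨by linarith, by linarith⟩).hasDerivAt (Icc_mem_nhds (by linarith) (by linarith))

namespace IsClampedSolution

lemma continuousOn (h : IsClampedSolution β lam ℓ j m) : ContinuousOn m (Icc 0 ℓ) :=
  fun x hx => (h.2 x hx).continuousAt.continuousWithinAt

lemma endpoint_pos_of_zero (h : IsClampedSolution β lam ℓ 0 m) (hβlam : 0 < β * lam) (hℓ : 0 < ℓ) :
    0 < m ℓ := by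
  have hmono : MonotoneOn m (Icc 0 ℓ) := by
    refine monotoneOn_of_hasDerivWithinAt_nonneg (convex_Icc 0 ℓ) h.continuousOn
      (fun x hx => (h.2 x (interior_subset hx)).hasDerivWithinAt) fun x _ => ?_
    simpa using (clampedField_mem_Icc (ℓ := ℓ) hβlam.le 0 x (m x)).1
  have hℓ₀ : ℓ ∈ Icc 0 ℓ := right_mem_Icc.2 hℓ.le
  have hle := hmono (left_mem_Icc.2 hℓ.le) hℓ₀ hℓ.le
  rw [h.1] at hle
  refine hle.lt_of_ne' fun hmℓ => ?_
  have hzero : ∀ x ∈ Icc 0 ℓ, m x = 0 := fun x hx =>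
    le_antisymm (hmℓ ▸ hmono hx hℓ₀ hx.2) (h.1 ▸ hmono (left_mem_Icc.2 hℓ.le) hx hx.1)
  have hmid : ℓ / 2 ∈ Icc 0 ℓ := ⟨by linarith, by linarith⟩
  have hconst : HasDerivAt m 0 (ℓ / 2) :=
    (hasDerivAt_const _ (0 : ℝ)).congr_of_eventuallyEq <|
      Filter.eventually_of_mem (Icc_mem_nhds (by linarith) (by linarith)) hzero
  have := (h.2 _ hmid).unique hconst
  rw [hzero _ hmid, clampedField_of_mem _ _ (by norm_num), gfun_half] at this
  linarith

lemma endpoint_neg_of_eq_mul (h : IsClampedSolution β lam ℓ (β * lam) m) (hβlam : 0 < β * lam)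
    (hℓ : 0 < ℓ) : m ℓ < 0 := by
  have hanti : StrictAntiOn m (Icc 0 ℓ) := by
    refine strictAntiOn_of_hasDerivWithinAt_neg (convex_Icc 0 ℓ) h.continuousOn
      (fun x hx => (h.2 x (interior_subset hx)).hasDerivWithinAt) fun x _ => ?_
    linarith [(clampedField_mem_Icc (ℓ := ℓ) hβlam.le (β * lam) x (m x)).2]
  simpa [h.1] using hanti (left_mem_Icc.2 hℓ.le) (right_mem_Icc.2 hℓ.le) hℓ

lemma mem_Icc (h : IsClampedSolution β lam ℓ j m) (hj : 0 < j) (hmℓ : m ℓ = 0) :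
    ∀ x ∈ Icc 0 ℓ, m x ∈ Icc (-1) 1 := by
  have hlevel (c : ℝ) (hc : |c| = 1) (x : ℝ) (hmx : m x = c) :
      clampedField β lam ℓ j x (m x) < 0 := by
    rw [hmx, clampedField_of_abs_eq_one _ _ hc]; linarith
  intro x hx
  refine ⟨not_lt.1 fun hlt => ?_, le_of_hasDerivAt_neg_of_eq h.2 (by rw [h.1]; norm_num)
    (fun y _ => hlevel 1 abs_one y) x hx⟩
  have hsub : Icc x ℓ ⊆ Icc 0 ℓ := Icc_subset_Icc_left hx.1
  have := le_of_hasDerivAt_neg_of_eq (fun y hy => h.2 y (hsub hy)) hlt.le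
    (fun y _ => hlevel (-1) (by norm_num) y) ℓ ⟨hx.2, le_rfl⟩
  linarith

lemma isStationarySolution (h : IsClampedSolution β lam ℓ j m) (hj : 0 < j) (hmℓ : m ℓ = 0) :
    IsStationarySolution β lam ℓ j m :=
  ⟨⟨h.1, fun x hx => clampedField_of_mem j x (h.mem_Icc hj hmℓ x hx) ▸ h.2 x hx⟩, hmℓ⟩

end IsClampedSolution

end ClampedSolution

theorem exists_isStationarySolution {β lam ℓ : ℝ} (hβlam : 0 < β * lam) (hℓ : 0 < ℓ) :
    ∃ j m, IsStationarySolution β lam ℓ j m := by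
  choose m hm using exists_isClampedSolution hβlam.le hℓ.le
  have hshoot : Continuous fun j => m j ℓ :=
    continuous_apply_of_hasDerivAt_of_dist_le (v := fun j => clampedField β lam ℓ j) (L := 2) hℓ.le
      (fun j => lipschitzWith_clampedField hβlam.le j)
      (fun p q t y => (dist_clampedField_clampedField p q t y).le)
      (fun j => (hm j).2) fun p q => by rw [(hm p).1, (hm q).1]
  obtain ⟨j, hj, hjℓ⟩ := intermediate_value_Icc' hβlam.le hshoot.continuousOn
    ⟨((hm _).endpoint_neg_of_eq_mul hβlam hℓ).le, ((hm 0).endpoint_pos_of_zero hβlam hℓ).le⟩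
  have hjpos : 0 < j := hj.1.lt_of_ne <| by
    rintro rfl
    exact ((hm 0).endpoint_pos_of_zero hβlam hℓ).ne' hjℓ
  exact ⟨j, m j, (hm j).isStationarySolution hjpos hjℓ⟩

namespace IsStationarySolution

variable {β lam ℓ j₁ j₂ : ℝ} {m₁ m₂ : ℝ → ℝ}

theorem unique (hℓ : 0 < ℓ) (h₁ : IsStationarySolution β lam ℓ j₁ m₁)
    (h₂ : IsStationarySolution β lam ℓ j₂ m₂) :
    j₁ = j₂ ∧ ∀ x ∈ Icc 0 ℓ, m₁ x = m₂ x := by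
  obtain ⟨⟨h₁0, h₁'⟩, h₁ℓ⟩ := h₁
  obtain ⟨⟨h₂0, h₂'⟩, h₂ℓ⟩ := h₂
  have hcont : ContinuousOn (fun x => -(β * lam * gfun ℓ x * (m₁ x + m₂ x))) (Icc 0 ℓ) := by
    have hm₁ : ContinuousOn m₁ (Icc 0 ℓ) := fun x hx => (h₁' x hx).continuousAt.continuousWithinAt
    have hm₂ : ContinuousOn m₂ (Icc 0 ℓ) := fun x hx => (h₂' x hx).continuousAt.continuousWithinAt
    exact ((continuous_const.mul (continuous_gfun ℓ)).continuousOn.mul (hm₁.add hm₂)).neg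
  have hdiff : ∀ x ∈ Icc 0 ℓ, HasDerivAt (fun x => m₁ x - m₂ x)
      (2 * (j₂ - j₁) + -(β * lam * gfun ℓ x * (m₁ x + m₂ x)) * (m₁ x - m₂ x)) x :=
    fun x hx => ((h₁' x hx).fun_sub (h₂' x hx)).congr_deriv (by ring)
  obtain ⟨hj, hm⟩ := eq_zero_of_hasDerivAt_eq_const_add_mul hℓ hcont hdiff
    (by rw [h₁0, h₂0, sub_self]) (by rw [h₁ℓ, h₂ℓ, sub_self])
  exact ⟨by linarith, fun x hx => sub_eq_zero.1 (hm x hx)⟩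

end IsStationarySolution

/-- Corollary A.2 (existence and uniqueness of the stationary solution). -/
theorem stationary_exists_unique (β lam ℓ : ℝ) (hβ : 0 < β) (hlam : 0 < lam) (hℓ : 2 < ℓ) :
    (∃ j : ℝ, ∃ m : ℝ → ℝ, IsStationarySolution β lam ℓ j m) ∧
    (∀ j₁ j₂ : ℝ, ∀ m₁ m₂ : ℝ → ℝ,
      IsStationarySolution β lam ℓ j₁ m₁ → IsStationarySolution β lam ℓ j₂ m₂ →
      j₁ = j₂ ∧ ∀ x ∈ Icc (0 : ℝ) ℓ, m₁ x = m₂ x) :=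
  ⟨exists_isStationarySolution (mul_pos hβ hlam) (by linarith),
    fun _ _ _ _ h₁ h₂ => h₁.unique (by linarith) h₂⟩
end

section
/- (Corollary A.2, a priori bound) If (j, m) is a stationary solution, then |m(x)| < 1 for all x ∈ [0, ℓ]. -/
open Real Set

/-!
If `m` reaches the level `1`, then at the first time it does so `m' = -2j ≥ 0`, and at the last
time `m' = -2j ≤ 0`; hence `j = 0`. But then the constant `1` solves the same equation
`m' = βλ g (1 - m²)`, whose right-hand side is locally Lipschitz in `m` because `g` is bounded, so
by uniqueness `m(0) = 1`, which is absurd. The level `-1` is handled by applying this to `-m`.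
-/

open Filter Topology

lemma HasDerivAt.nonneg_of_eventually_le_left {f : ℝ → ℝ} {f' x : ℝ} (hf : HasDerivAt f f' x)
    (h : ∀ᶠ y in 𝓝[<] x, f y ≤ f x) : 0 ≤ f' := by
  refine ge_of_tendsto (hasDerivAt_iff_tendsto_slope_left_right.1 hf).1 ?_
  filter_upwards [h, self_mem_nhdsWithin] with y hy hyx
  rw [slope_def_field]
  exact div_nonneg_of_nonpos (sub_nonpos.2 hy) (sub_nonpos.2 hyx.le)

lemma HasDerivAt.nonpos_of_eventually_le_right {f : ℝ → ℝ} {f' x : ℝ} (hf : HasDerivAt f f' x)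
    (h : ∀ᶠ y in 𝓝[>] x, f y ≤ f x) : f' ≤ 0 := by
  refine le_of_tendsto (hasDerivAt_iff_tendsto_slope_left_right.1 hf).2 ?_
  filter_upwards [h, self_mem_nhdsWithin] with y hy hyx
  rw [slope_def_field]
  exact div_nonpos_of_nonpos_of_nonneg (sub_nonpos.2 hy) (sub_nonneg.2 hyx.le)

lemma ContinuousOn.exists_first_hit {f : ℝ → ℝ} {a b c : ℝ} (hab : a ≤ b)
    (hf : ContinuousOn f (Icc a b)) (ha : f a < c) (hb : c ≤ f b) :
    ∃ x ∈ Ioc a b, f x = c ∧ ∀ y ∈ Ico a x, f y < c := by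
  set S := Icc a b ∩ f ⁻¹' Ici c
  have hS : IsCompact S := isCompact_Icc.of_isClosed_subset
    (hf.preimage_isClosed_of_isClosed isClosed_Icc isClosed_Ici) inter_subset_left
  obtain ⟨⟨hax, hxb⟩, hcx⟩ : sInf S ∈ S := hS.sInf_mem ⟨b, ⟨hab, le_rfl⟩, hb⟩
  have hbefore : ∀ y ∈ Ico a (sInf S), f y < c := fun y hy =>
    lt_of_not_ge fun hcy => (csInf_le hS.bddBelow ⟨⟨hy.1, hy.2.le.trans hxb⟩, hcy⟩).not_gt hy.2
  have hax' : a < sInf S := lt_of_le_of_ne hax fun h => (h ▸ ha).not_ge hcx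
  obtain ⟨z, hz, hfz⟩ :=
    intermediate_value_Icc hax (hf.mono (Icc_subset_Icc_right hxb)) ⟨ha.le, hcx⟩
  have hzx : z = sInf S :=
    le_antisymm hz.2 (csInf_le hS.bddBelow ⟨⟨hz.1, hz.2.trans hxb⟩, hfz.ge⟩)
  exact ⟨sInf S, ⟨hax', hxb⟩, hzx ▸ hfz, hbefore⟩

lemma ContinuousOn.exists_last_hit {f : ℝ → ℝ} {a b c : ℝ} (hab : a ≤ b)
    (hf : ContinuousOn f (Icc a b)) (ha : c ≤ f a) (hb : f b < c) :
    ∃ x ∈ Ico a b, f x = c ∧ ∀ y ∈ Ioc x b, f y < c := by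
  have hf' : ContinuousOn (f ∘ Neg.neg) (Icc (-b) (-a)) :=
    hf.comp continuousOn_neg fun y hy => ⟨le_neg.1 hy.2, neg_le.1 hy.1⟩
  obtain ⟨x, hx, hfx, hlt⟩ :=
    hf'.exists_first_hit (neg_le_neg hab) (by simpa using hb) (by simpa using ha)
  refine ⟨-x, ⟨le_neg.1 hx.2, neg_lt.1 hx.1⟩, hfx, fun y hy => ?_⟩
  simpa using hlt (-y) ⟨neg_le_neg hy.2, neg_lt.1 hy.1⟩

lemma lipschitzOnWith_mul_one_sub_sq {c B R : ℝ} (hc : |c| ≤ B) :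
    LipschitzOnWith (2 * B * R).toNNReal (fun y => c * (1 - y ^ 2)) (Icc (-R) R) := by
  refine LipschitzOnWith.of_dist_le_mul fun x hx y hy => ?_
  have hB : 0 ≤ B := (abs_nonneg c).trans hc
  have hR : 0 ≤ R := by linarith [hx.1, hx.2]
  have hxy : |x + y| ≤ 2 * R := abs_le.2 ⟨by linarith [hx.1, hy.1], by linarith [hx.2, hy.2]⟩
  rw [Real.coe_toNNReal _ (by positivity), Real.dist_eq, Real.dist_eq]
  calc |c * (1 - x ^ 2) - c * (1 - y ^ 2)| = |c| * |x + y| * |x - y| := by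
        rw [show c * (1 - x ^ 2) - c * (1 - y ^ 2) = -(c * (x + y) * (x - y)) by ring,
          abs_neg, abs_mul, abs_mul]
    _ ≤ B * (2 * R) * |x - y| := by gcongr
    _ = 2 * B * R * |x - y| := by ring

lemma eq_one_of_hasDerivAt_mul_one_sub_sq {c m : ℝ → ℝ} {a b B : ℝ} (hab : a ≤ b)
    (hc : ∀ x ∈ Icc a b, |c x| ≤ B)
    (hm : ∀ x ∈ Icc a b, HasDerivAt m (c x * (1 - m x ^ 2)) x) (hmb : m b = 1) : m a = 1 := by
  have hcont : ContinuousOn m (Icc a b) := fun x hx => (hm x hx).continuousAt.continuousWithinAt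
  obtain ⟨C, hC⟩ := isCompact_Icc.exists_bound_of_continuousOn hcont
  set R := max C 1
  have hmR : ∀ x ∈ Icc a b, m x ∈ Icc (-R) R := fun x hx =>
    abs_le.1 ((Real.norm_eq_abs _ ▸ hC x hx).trans (le_max_left _ _))
  have h1R : (1 : ℝ) ∈ Icc (-R) R := ⟨by linarith [le_max_right C 1], le_max_right C 1⟩
  refine ODE_solution_unique_of_mem_Icc_left (v := fun t y => c t * (1 - y ^ 2))
    (s := fun _ => Icc (-R) R)
    (fun t ht => lipschitzOnWith_mul_one_sub_sq (hc t (Ioc_subset_Icc_self ht)))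
    hcont (fun t ht => (hm t (Ioc_subset_Icc_self ht)).hasDerivWithinAt)
    (fun t ht => hmR t (Ioc_subset_Icc_self ht))
    continuousOn_const (fun t _ => ?_) (fun _ _ => h1R) hmb ⟨le_rfl, hab⟩
  simpa using hasDerivWithinAt_const t (Iic t) (1 : ℝ)

lemma lt_one_of_hasDerivAt_add_mul_one_sub_sq {c m : ℝ → ℝ} {a b d B : ℝ}
    (hc : ∀ x ∈ Icc a b, |c x| ≤ B)
    (hm : ∀ x ∈ Icc a b, HasDerivAt m (d + c x * (1 - m x ^ 2)) x)
    (ha : m a < 1) (hb : m b < 1) : ∀ x ∈ Icc a b, m x < 1 := by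
  intro t ht
  by_contra! ht1
  have hcont : ContinuousOn m (Icc a b) := fun x hx => (hm x hx).continuousAt.continuousWithinAt
  have hm_hit : ∀ x ∈ Icc a b, m x = 1 → HasDerivAt m d x := fun x hx hx1 => by
    simpa [hx1] using hm x hx
  obtain ⟨x₁, hx₁, hmx₁, hbefore⟩ :=
    (hcont.mono (Icc_subset_Icc_right ht.2)).exists_first_hit ht.1 ha ht1
  obtain ⟨x₂, hx₂, hmx₂, hafter⟩ :=
    (hcont.mono (Icc_subset_Icc_left ht.1)).exists_last_hit ht.2 ht1 hb
  have hx₁ab : x₁ ∈ Icc a b := ⟨hx₁.1.le, hx₁.2.trans ht.2⟩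
  have hd_nonneg : 0 ≤ d := (hm_hit x₁ hx₁ab hmx₁).nonneg_of_eventually_le_left <| by
    filter_upwards [Ico_mem_nhdsLT hx₁.1] with y hy
    exact hmx₁ ▸ (hbefore y hy).le
  have hd_nonpos : d ≤ 0 :=
    (hm_hit x₂ ⟨ht.1.trans hx₂.1, hx₂.2.le⟩ hmx₂).nonpos_of_eventually_le_right <| by
      filter_upwards [Ioc_mem_nhdsGT hx₂.2] with y hy
      exact hmx₂ ▸ (hafter y hy).le
  have hsub : Icc a x₁ ⊆ Icc a b := Icc_subset_Icc_right hx₁ab.2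
  have hma : m a = 1 := eq_one_of_hasDerivAt_mul_one_sub_sq hx₁ab.1 (fun x hx => hc x (hsub hx))
    (fun x hx => by simpa [le_antisymm hd_nonpos hd_nonneg] using hm x (hsub hx)) hmx₁
  exact ha.ne hma

lemma abs_gfun_le_two (ℓ x : ℝ) : |gfun ℓ x| ≤ 2 := by
  have h : ∀ a : ℝ, |∫ y in a..a + 1, if y ≤ ℓ / 2 then (1 : ℝ) else 0| ≤ 1 := fun a => by
    simpa using intervalIntegral.norm_integral_le_of_norm_le_const (a := a) (b := a + 1) (C := 1)
      (f := fun y => if y ≤ ℓ / 2 then (1 : ℝ) else 0) (fun y _ => by split <;> simp)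
  have h₁ := h (x - 1)
  rw [sub_add_cancel] at h₁
  exact (abs_sub _ _).trans (by linarith [h x])

theorem stationary_abs_lt_one_general (β lam ℓ : ℝ)
    (j : ℝ) (m : ℝ → ℝ) (hm : IsStationarySolution β lam ℓ j m) :
    ∀ x ∈ Icc (0 : ℝ) ℓ, |m x| < 1 := by
  obtain ⟨⟨hm0, hderiv⟩, hmℓ⟩ := hm
  have hc : ∀ x ∈ Icc 0 ℓ, |β * lam * gfun ℓ x| ≤ |β * lam| * 2 := fun x _ => by
    rw [abs_mul]; gcongr; exact abs_gfun_le_two ℓ x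
  have upper := lt_one_of_hasDerivAt_add_mul_one_sub_sq (d := -2 * j) hc
    (fun x hx => (hderiv x hx).congr_deriv (by ring)) (by simp [hm0]) (by simp [hmℓ])
  have lower := lt_one_of_hasDerivAt_add_mul_one_sub_sq (m := -m) (d := 2 * j)
    (fun x hx => (abs_neg _).trans_le (hc x hx))
    (fun x hx => (hderiv x hx).neg.congr_deriv (by rw [Pi.neg_apply]; ring))
    (by simp [hm0]) (by simp [hmℓ])
  exact fun x hx => abs_lt.2 ⟨neg_lt.1 (lower x hx), upper x hx⟩

/-- Corollary A.2 (a priori bound `|m| < 1`). -/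
theorem stationary_abs_lt_one (β lam ℓ : ℝ) (hβ : 0 < β) (hlam : 0 < lam) (hℓ : 2 < ℓ)
    (j : ℝ) (m : ℝ → ℝ) (hm : IsStationarySolution β lam ℓ j m) :
    ∀ x ∈ Icc (0 : ℝ) ℓ, |m x| < 1 :=
  stationary_abs_lt_one_general β lam ℓ j m hm
end

section
/- (Lemma A.4, Gronwall comparison with the boundary layer) Let (j, m) be a stationary solution, so that j > 0 and |m| < 1 on [0, ℓ] and in particular α := m(ℓ/2 − 1) ∈ (−1, 1). Let a : [−1, 1] → ℝ be defined by a(x) = tanh(β(λ/2)(1 + x)² + artanh(α)) for x ∈ [−1, 0] and a(x) = tanh(β(λ/2)(1 − (1 − x)²) + artanh(a(0))) for x ∈ (0, 1]. Then sup_{|x| ≤ 1} |m(ℓ/2 + x) − a(x)| ≤ (j/(βλ)) e^{4βλ}. -/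
open Real Set

/-- The tent profile `h(x) = 1 + x` on `[-1, 0]`, `1 - x` on `(0, 1]`. -/
noncomputable def hfun (x : ℝ) : ℝ := if x ≤ 0 then 1 + x else 1 - x

/-- The inverse hyperbolic tangent on `(-1, 1)`. -/
noncomputable def artanh (x : ℝ) : ℝ := (1 / 2) * Real.log ((1 + x) / (1 - x))

/-- The explicit boundary-layer solution (A.9) with initial value `α` at `x = -1`. -/
noncomputable def blayer (β lam α : ℝ) (x : ℝ) : ℝ :=
  if x ≤ 0 then Real.tanh (β * (lam / 2) * (1 + x) ^ 2 + _root_.artanh α)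
  else Real.tanh (β * (lam / 2) * (1 - (1 - x) ^ 2) +
    _root_.artanh (Real.tanh (β * (lam / 2) * (1 + 0) ^ 2 + _root_.artanh α)))

/-! Outside `[ℓ/2 - 1, ℓ/2 + 1]` we have `g = 0`, so `m` is linear with slope `-2j` there and
`u t = m (ℓ/2 + t)` satisfies `u (-1) = -2j(ℓ/2 - 1) = -u 1`. On `[-1, 1]` the function `u` solves
`u' = -2j + βλ(1 - u²)h`, and the boundary layer solves the same equation with `j = 0`. Barrier
arguments combined with these boundary values force `j > 0` and `-1 < u ≤ 1`. Then `d = u - a`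
satisfies `d (-1) = 0` and `|d'| ≤ 2βλ|d| + 2j`, and Grönwall's inequality gives
`|d t| ≤ (j/(βλ))(e^{2βλ(t+1)} - 1)`. -/

lemma integral_ite_le_one_zero (c : ℝ) {a b : ℝ} (hab : a ≤ b) :
    ∫ y in a..b, (if y ≤ c then (1 : ℝ) else 0) = min b c - min a c := by
  have : (fun y : ℝ => if y ≤ c then (1 : ℝ) else 0) = (Iic c).indicator 1 := by
    ext y; simp [indicator_apply]
  rw [this, intervalIntegral.integral_of_le hab,
    MeasureTheory.integral_indicator_one measurableSet_Iic,
    MeasureTheory.measureReal_restrict_apply measurableSet_Iic, inter_comm, Ioc_inter_Iic,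
    Real.volume_real_Ioc]
  simp only [min_def, max_def]
  split_ifs <;> linarith

lemma gfun_eq_min (ℓ x : ℝ) :
    gfun ℓ x = (min x (ℓ / 2) - min (x - 1) (ℓ / 2)) - (min (x + 1) (ℓ / 2) - min x (ℓ / 2)) := by
  rw [gfun, integral_ite_le_one_zero _ (by linarith), integral_ite_le_one_zero _ (by linarith)]

lemma gfun_eq_zero_of_le {ℓ x : ℝ} (hx : x ≤ ℓ / 2 - 1) : gfun ℓ x = 0 := by
  rw [gfun_eq_min]
  simp only [min_def]
  split_ifs <;> linarith

lemma gfun_eq_zero_of_ge {ℓ x : ℝ} (hx : ℓ / 2 + 1 ≤ x) : gfun ℓ x = 0 := by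
  rw [gfun_eq_min]
  simp only [min_def]
  split_ifs <;> linarith

lemma gfun_half_add_eq_hfun {ℓ t : ℝ} (ht : t ∈ Icc (-1 : ℝ) 1) : gfun ℓ (ℓ / 2 + t) = hfun t := by
  obtain ⟨h₁, h₂⟩ := ht
  rw [gfun_eq_min, hfun]
  simp only [min_def]
  split_ifs <;> linarith

lemma hfun_nonneg {t : ℝ} (ht : t ∈ Icc (-1 : ℝ) 1) : 0 ≤ hfun t := by
  obtain ⟨h₁, h₂⟩ := ht
  unfold hfun; split_ifs <;> linarith

lemma abs_hfun_le_one {t : ℝ} (ht : t ∈ Icc (-1 : ℝ) 1) : |hfun t| ≤ 1 := by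
  rw [abs_of_nonneg (hfun_nonneg ht)]
  unfold hfun; split_ifs <;> linarith [ht.1, ht.2]

lemma hasDerivAt_ite_le {f g f' g' : ℝ → ℝ} {c : ℝ} (hf : ∀ x, HasDerivAt f (f' x) x)
    (hg : ∀ x, HasDerivAt g (g' x) x) (hc : f c = g c) (hc' : f' c = g' c) (x : ℝ) :
    HasDerivAt (fun y => if y ≤ c then f y else g y) (if x ≤ c then f' x else g' x) x := by
  rcases lt_trichotomy x c with hx | rfl | hx
  · rw [if_pos hx.le]
    refine (hf x).congr_of_eventuallyEq ?_
    filter_upwards [Iio_mem_nhds hx] with y hy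
    exact if_pos (le_of_lt hy)
  · have hIic : HasDerivWithinAt (fun y => if y ≤ x then f y else g y) (f' x) (Iic x) x :=
      (hf x).hasDerivWithinAt.congr (fun y hy => if_pos hy) (if_pos le_rfl)
    have hIci : HasDerivWithinAt (fun y => if y ≤ x then f y else g y) (f' x) (Ici x) x := by
      rw [hc']
      refine (hg x).hasDerivWithinAt.congr (fun y hy => ?_) (by simp [hc])
      split_ifs with h
      · rw [le_antisymm h hy, hc]
      · rfl
    rw [if_pos le_rfl, ← hasDerivWithinAt_univ, ← Iic_union_Ici]
    exact hIic.union hIci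
  · rw [if_neg hx.not_ge]
    refine (hg x).congr_of_eventuallyEq ?_
    filter_upwards [Ioi_mem_nhds hx] with y hy
    exact if_neg (not_le.mpr hy)

noncomputable def hfunPrimitive (x : ℝ) : ℝ :=
  if x ≤ 0 then (1 + x) ^ 2 / 2 else 1 - (1 - x) ^ 2 / 2

lemma hasDerivAt_hfunPrimitive (x : ℝ) : HasDerivAt hfunPrimitive (hfun x) x :=
  hasDerivAt_ite_le (f' := fun x => 1 + x) (g' := fun x => 1 - x)
    (fun x => (((hasDerivAt_id' x).const_add 1).fun_pow 2).div_const 2 |>.congr_deriv (by ring))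
    (fun x => ((((hasDerivAt_id' x).const_sub 1).fun_pow 2).div_const 2).const_sub 1
      |>.congr_deriv (by ring))
    (by norm_num) (by norm_num) x

lemma Real.hasDerivAt_tanh (x : ℝ) : HasDerivAt tanh (1 - tanh x ^ 2) x := by
  have hc := (cosh_pos x).ne'
  have h := (hasDerivAt_sinh x).div (hasDerivAt_cosh x) hc
  rw [show tanh = fun y => sinh y / cosh y from funext tanh_eq_sinh_div_cosh]
  refine h.congr_deriv ?_
  beta_reduce
  field_simp

lemma artanh_eq_real_artanh {x : ℝ} (hx : x ∈ Icc (-1 : ℝ) 1) :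
    _root_.artanh x = Real.artanh x :=
  (Real.artanh_eq_half_log hx).symm

lemma blayer_eq_tanh (β lam α x : ℝ) :
    blayer β lam α x = tanh (β * lam * hfunPrimitive x + _root_.artanh α) := by
  have htanh : _root_.artanh (tanh (β * (lam / 2) * (1 + 0) ^ 2 + _root_.artanh α)) =
      β * (lam / 2) + _root_.artanh α := by
    rw [artanh_eq_real_artanh ⟨(neg_one_lt_tanh _).le, (tanh_lt_one _).le⟩, Real.artanh_tanh]
    ring
  unfold blayer hfunPrimitive
  split_ifs
  · ring_nf
  · rw [htanh]; ring_nf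

lemma blayer_neg_one {β lam α : ℝ} (hα : α ∈ Ioo (-1 : ℝ) 1) : blayer β lam α (-1) = α := by
  rw [blayer_eq_tanh, artanh_eq_real_artanh (Ioo_subset_Icc_self hα)]
  norm_num [hfunPrimitive, Real.tanh_artanh hα]

lemma blayer_zero_one (β lam : ℝ) : blayer β lam 0 1 = tanh (β * lam) := by
  norm_num [blayer_eq_tanh, hfunPrimitive, _root_.artanh]

lemma abs_blayer_lt_one (β lam α x : ℝ) : |blayer β lam α x| < 1 := by
  rw [blayer_eq_tanh]
  exact abs_tanh_lt_one _

def LayerODE (j k : ℝ) (w : ℝ → ℝ) (s : Set ℝ) (u : ℝ → ℝ) : Prop :=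
  ∀ t ∈ s, HasDerivAt u (-2 * j + k * (1 - u t ^ 2) * w t) t

lemma layerODE_blayer (β lam α : ℝ) (s : Set ℝ) : LayerODE 0 (β * lam) hfun s (blayer β lam α) := by
  intro x _
  rw [show blayer β lam α = fun x => tanh (β * lam * hfunPrimitive x + _root_.artanh α) from
    funext (blayer_eq_tanh β lam α)]
  refine ((Real.hasDerivAt_tanh _).comp x
    (((hasDerivAt_hfunPrimitive x).const_mul (β * lam)).add_const _)).congr_deriv ?_
  ring

lemma image_le_of_hasDerivAt_lt_boundary {f f' B B' : ℝ → ℝ} {a b : ℝ}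
    (hf : ∀ x ∈ Icc a b, HasDerivAt f (f' x) x) (hB : ∀ x, HasDerivAt B (B' x) x)
    (ha : f a ≤ B a) (bound : ∀ x ∈ Ico a b, f x = B x → f' x < B' x) :
    ∀ x ∈ Icc a b, f x ≤ B x :=
  image_le_of_deriv_right_lt_deriv_boundary (fun x hx => (hf x hx).continuousAt.continuousWithinAt)
    (fun x hx => (hf x (Ico_subset_Icc_self hx)).hasDerivWithinAt) ha hB bound

lemma gronwallBound_zero_le {K ε x T : ℝ} (hK : 0 < K) (hε : 0 ≤ ε) (hx : x ≤ T) :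
    gronwallBound 0 K ε x ≤ ε / K * exp (K * T) := by
  simp only [gronwallBound_of_K_ne_0 hK.ne', zero_mul, zero_add]
  have : exp (K * x) ≤ exp (K * T) := exp_le_exp.mpr (by gcongr)
  gcongr
  linarith

namespace LayerODE

variable {β lam j k : ℝ} {w u : ℝ → ℝ} {a b : ℝ}

lemma le_one (hu : LayerODE j k w (Icc a b) u) (hj : 0 < j) (ha : u a ≤ 1) :
    ∀ t ∈ Icc a b, u t ≤ 1 :=
  image_le_of_hasDerivAt_lt_boundary hu (fun _ => hasDerivAt_const _ 1) ha
    (fun x _ hx => by simp only [hx]; linarith)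

lemma nonneg (hu : LayerODE j k w (Icc a b) u) (hj : j < 0) (hk : 0 ≤ k)
    (hw : ∀ t ∈ Icc a b, 0 ≤ w t) (ha : 0 ≤ u a) : ∀ t ∈ Icc a b, 0 ≤ u t := by
  have h := image_le_of_hasDerivAt_lt_boundary (fun t ht => (hu t ht).neg)
    (fun _ => hasDerivAt_const _ 0) (neg_nonpos.mpr ha) (fun x hx hux => ?_)
  · exact fun t ht => neg_nonpos.mp (h t ht)
  · have hu0 : u x = 0 := neg_eq_zero.mp hux
    have := mul_nonneg hk (hw x (Ico_subset_Icc_self hx))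
    simp only [hu0]
    linarith

/-- Once `u ≤ -1` the logistic term of `u'` is nonpositive too, so `u` keeps decreasing and
never gets back above `-1`. -/
lemma neg_one_lt (hu : LayerODE j k w (Icc a b) u) (hj : 0 < j) (hk : 0 ≤ k)
    (hw : ∀ t ∈ Icc a b, 0 ≤ w t) (hb : -1 < u b) : ∀ s ∈ Icc a b, -1 < u s := by
  intro s hs
  by_contra! hus
  have h := image_le_of_hasDerivAt_lt_boundary (B := fun t => u s - j * (t - s)) (B' := fun _ => -j)
    (fun t ht => hu t ⟨hs.1.trans ht.1, ht.2⟩)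
    (fun t => ((hasDerivAt_id' t).sub_const s |>.const_mul j |>.const_sub (u s)).congr_deriv
      (by ring))
    (by simp) (fun t ht hut => ?_) b ⟨hs.2, le_rfl⟩
  · nlinarith [hs.2]
  · have hut' : u t ≤ -1 := by nlinarith [ht.1]
    have hsq : 1 ≤ u t ^ 2 := by nlinarith
    have := mul_nonneg hk (hw t ⟨hs.1.trans ht.1, ht.2.le⟩)
    nlinarith

lemma abs_sub_le_gronwallBound {v : ℝ → ℝ} {M : ℝ} (hu : LayerODE j k w (Icc a b) u)
    (hv : LayerODE 0 k w (Icc a b) v) (hw : ∀ t ∈ Icc a b, |w t| ≤ 1)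
    (huv : ∀ t ∈ Icc a b, |u t + v t| ≤ M) (ha : u a = v a) :
    ∀ t ∈ Icc a b, |u t - v t| ≤ gronwallBound 0 (|k| * M) (2 * |j|) (t - a) := by
  have hd : ∀ t ∈ Icc a b, HasDerivAt (fun t => u t - v t)
      (-2 * j - k * w t * (u t + v t) * (u t - v t)) t :=
    fun t ht => ((hu t ht).sub (hv t ht)).congr_deriv (by ring)
  refine norm_le_gronwallBound_of_norm_deriv_right_le
    (fun t ht => (hd t ht).continuousAt.continuousWithinAt)
    (fun t ht => (hd t (Ico_subset_Icc_self ht)).hasDerivWithinAt) (by simp [ha]) ?_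
  intro t ht
  have ht' := Ico_subset_Icc_self ht
  simp only [Real.norm_eq_abs]
  calc |-2 * j - k * w t * (u t + v t) * (u t - v t)|
      ≤ |k| * |w t| * |u t + v t| * |u t - v t| + 2 * |j| := by
        rw [← abs_mul, ← abs_mul, ← abs_mul, show 2 * |j| = |-2 * j| by simp [abs_mul]]
        exact (abs_sub _ _).trans (add_comm _ _).le
    _ ≤ |k| * 1 * M * |u t - v t| + 2 * |j| := by
        gcongr
        · exact hw t ht'
        · exact huv t ht'
    _ = |k| * M * |u t - v t| + 2 * |j| := by ring

/-- Uniqueness for the boundary-layer equation: here `1 - u²` is only locally Lipschitz, so the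
Grönwall constant comes from a bound on `u` over the compact interval. -/
lemma eq_blayer {α : ℝ} (hu : LayerODE 0 (β * lam) hfun (Icc (-1) 1) u) (hα : α ∈ Ioo (-1 : ℝ) 1)
    (h : u (-1) = α) : ∀ t ∈ Icc (-1 : ℝ) 1, u t = blayer β lam α t := by
  obtain ⟨R, hR⟩ := isCompact_Icc.exists_bound_of_continuousOn
    fun t ht => (hu t ht).continuousAt.continuousWithinAt
  intro t ht
  have h := hu.abs_sub_le_gronwallBound (M := R + 1) (layerODE_blayer β lam α _)
    (fun s hs => abs_hfun_le_one hs)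
    (fun s hs => (abs_add_le _ _).trans (add_le_add (hR s hs) (abs_blayer_lt_one β lam α s).le))
    (h.trans (blayer_neg_one hα).symm) t ht
  rw [abs_zero, mul_zero, gronwallBound_ε0_δ0] at h
  exact sub_eq_zero.mp (abs_nonpos_iff.mp h)

/-- For `j = 0` the solution started at `0` is the boundary layer, which ends at `tanh (βλ) ≠ 0`. -/
lemma pos_of_boundary_values {c : ℝ} (hu : LayerODE j (β * lam) hfun (Icc (-1) 1) u) (hβ : 0 < β)
    (hlam : 0 < lam) (hc : 0 < c) (h₁ : u (-1) = -2 * j * c) (h₂ : u 1 = 2 * j * c) : 0 < j := by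
  have hk : 0 < β * lam := mul_pos hβ hlam
  have hend : (1 : ℝ) ∈ Icc (-1 : ℝ) 1 := ⟨by norm_num, le_rfl⟩
  rcases lt_trichotomy j 0 with hj | rfl | hj
  · have := hu.nonneg hj hk.le (fun t ht => hfun_nonneg ht) (by rw [h₁]; nlinarith) 1 hend
    nlinarith
  · have := hu.eq_blayer (α := 0) ⟨by norm_num, by norm_num⟩ (by rw [h₁]; ring) 1 hend
    rw [h₂, blayer_zero_one, tanh_eq_sinh_div_cosh] at this
    have : 0 < sinh (β * lam) / cosh (β * lam) := div_pos (sinh_pos_iff.mpr hk) (cosh_pos _)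
    linarith
  · exact hj

lemma abs_sub_blayer_le (hu : LayerODE j (β * lam) hfun (Icc (-1) 1) u) (hβ : 0 < β)
    (hlam : 0 < lam) (hj : 0 < j) (h₁ : u (-1) < 1) (h₂ : -1 < u 1) :
    ∀ t ∈ Icc (-1 : ℝ) 1, |u t - blayer β lam (u (-1)) t| ≤ j / (β * lam) * exp (4 * β * lam) := by
  have hk : 0 < β * lam := mul_pos hβ hlam
  have hlow := hu.neg_one_lt hj hk.le (fun t ht => hfun_nonneg ht) h₂
  have hup := hu.le_one hj h₁.le
  have hα : u (-1) ∈ Ioo (-1 : ℝ) 1 := ⟨hlow (-1) ⟨le_rfl, by norm_num⟩, h₁⟩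
  intro t ht
  have h := hu.abs_sub_le_gronwallBound (M := 2) (layerODE_blayer β lam (u (-1)) _)
    (fun s hs => abs_hfun_le_one hs)
    (fun s hs => (abs_add_le _ _).trans (by
      linarith [abs_le.mpr ⟨(hlow s hs).le, hup s hs⟩, abs_blayer_lt_one β lam (u (-1)) s]))
    (blayer_neg_one hα).symm t ht
  rw [abs_of_pos hk, abs_of_pos hj] at h
  calc _ ≤ _ := h
    _ ≤ 2 * j / (β * lam * 2) * exp (β * lam * 2 * 2) :=
        gronwallBound_zero_le (by positivity) (by positivity) (by linarith [ht.2])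
    _ = j / (β * lam) * exp (4 * β * lam) := by
        field_simp
        ring_nf

end LayerODE

lemma sub_eq_mul_of_hasDerivAt_const {f : ℝ → ℝ} {a b c : ℝ} (hab : a ≤ b)
    (hf : ∀ x ∈ Icc a b, HasDerivAt f c x) : f b - f a = c * (b - a) := by
  have := intervalIntegral.integral_eq_sub_of_hasDerivAt (f' := fun _ => c)
    (by rwa [uIcc_of_le hab]) intervalIntegrable_const
  simpa [mul_comm] using this.symm

namespace IsIVPSolution

variable {β lam ℓ j : ℝ} {m : ℝ → ℝ}

lemma layerODE_bump (hm : IsIVPSolution β lam ℓ j m) (hℓ : 2 ≤ ℓ) :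
    LayerODE j (β * lam) hfun (Icc (-1) 1) (fun t => m (ℓ / 2 + t)) := by
  intro t ht
  have h := hm.2 (ℓ / 2 + t) ⟨by linarith [ht.1], by linarith [ht.2]⟩
  rw [gfun_half_add_eq_hfun ht] at h
  exact (h.comp t ((hasDerivAt_id' t).const_add _)).congr_deriv (by ring)

lemma apply_half_sub_one (hm : IsIVPSolution β lam ℓ j m) (hℓ : 2 ≤ ℓ) :
    m (ℓ / 2 - 1) = -2 * j * (ℓ / 2 - 1) := by
  have h := sub_eq_mul_of_hasDerivAt_const (a := 0) (b := ℓ / 2 - 1) (c := -2 * j) (by linarith)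
    fun x hx => by simpa [gfun_eq_zero_of_le hx.2] using hm.2 x ⟨hx.1, by linarith [hx.2]⟩
  rw [hm.1] at h
  linarith

end IsIVPSolution

lemma IsStationarySolution.apply_half_add_one {β lam ℓ j : ℝ} {m : ℝ → ℝ}
    (hm : IsStationarySolution β lam ℓ j m) (hℓ : 2 ≤ ℓ) :
    m (ℓ / 2 + 1) = 2 * j * (ℓ / 2 - 1) := by
  have h := sub_eq_mul_of_hasDerivAt_const (a := ℓ / 2 + 1) (b := ℓ) (c := -2 * j) (by linarith)
    fun x hx => by simpa [gfun_eq_zero_of_ge hx.1] using hm.1.2 x ⟨by linarith [hx.1], hx.2⟩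
  rw [hm.2] at h
  linarith

/-- Lemma A.4: the stationary profile near the weld is within `(j/(βλ)) e^{4βλ}`
of the explicit boundary-layer solution started from `α = m(l/2 - 1)`. -/
theorem stationary_close_to_blayer (β lam ℓ : ℝ) (hβ : 0 < β) (hlam : 0 < lam) (hℓ : 4 < ℓ)
    (j : ℝ) (m : ℝ → ℝ) (hm : IsStationarySolution β lam ℓ j m) :
    ∀ x ∈ Icc (-1 : ℝ) 1,
      |m (ℓ / 2 + x) - blayer β lam (m (ℓ / 2 - 1)) x| ≤
        j / (β * lam) * Real.exp (4 * β * lam) := by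
  have hu := hm.1.layerODE_bump (by linarith)
  have hleft : m (ℓ / 2 + -1) = -2 * j * (ℓ / 2 - 1) := by
    rw [← sub_eq_add_neg]; exact hm.1.apply_half_sub_one (by linarith)
  have hright := hm.apply_half_add_one (by linarith)
  have hc : 0 < ℓ / 2 - 1 := by linarith
  have hj : 0 < j := hu.pos_of_boundary_values hβ hlam hc hleft hright
  have h := hu.abs_sub_blayer_le hβ hlam hj (by rw [hleft]; nlinarith) (by rw [hright]; nlinarith)
  simpa [← sub_eq_add_neg] using h
end
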